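/- arXiv:2405.12248 — 3 statements merged into one kernel-verified Lean document; each statement's English description precedes it below -/
import Mathlib

section
/- For every integer k ≥ 1, 1/2 = 1/(4k+2) + Σ_{l=1}^{k} Σ_{n=1}^{∞} (-1)^{l-1} · (2k)! / ((2k+1-2l)! · (nπ)^{2l}). -/
/-!
Euler's formula `ζ(2l) = (-1)^(l+1) 2^(2l-1) π^(2l) B_{2l} / (2l)!` turns the `l`-th inner series
into `C(2k+1, 2l) 2^(2l) B_{2l} / (2(2k+1))`. The theorem then reduces to
`∑_{l=1}^{k} C(2k+1, 2l) 2^(2l) B_{2l} = 2k`. This is `2^(2k+1) B_{2k+1}(1/2) = 0` expanded,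
once the terms `B_0 = 1`, `B_1 = -1/2` and the vanishing higher odd Bernoulli numbers are split
off; odd Bernoulli polynomials vanish at `1/2` by the symmetry `B_n(1 - x) = (-1)^n B_n(x)`.
-/

open Real Finset Nat

theorem Polynomial.bernoulli_eval_one_half_of_odd {n : ℕ} (hn : Odd n) :
    (bernoulli n).eval (1 / 2 : ℚ) = 0 := by
  have h := bernoulli_eval_one_sub n (1 / 2)
  rw [hn.neg_one_pow] at h
  norm_num at h
  linarith

theorem sum_choose_mul_two_pow_mul_bernoulli_of_odd {n : ℕ} (hn : Odd n) :
    ∑ i ∈ range (n + 1), (n.choose i : ℚ) * 2 ^ i * bernoulli i = 0 := by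
  have h := Polynomial.bernoulli_eval_one_half_of_odd hn
  simp only [Polynomial.bernoulli, Polynomial.eval_finsetSum, Polynomial.eval_monomial] at h
  calc _ = 2 ^ n * ∑ i ∈ range (n + 1), bernoulli i * n.choose i * (1 / 2) ^ (n - i) := by
        rw [mul_sum]
        refine sum_congr rfl fun i hi => ?_
        have hin : i + (n - i) = n := Nat.add_sub_cancel' (Nat.lt_succ_iff.mp (mem_range.mp hi))
        rw [← hin, pow_add, div_pow, hin]
        field_simp
        ring
    _ = 0 := by rw [h, mul_zero]

theorem sum_range_two_mul {M : Type*} [AddCommMonoid M] (f : ℕ → M) (n : ℕ) :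
    ∑ i ∈ range (2 * n), f i = ∑ j ∈ range n, (f (2 * j) + f (2 * j + 1)) := by
  induction n with
  | zero => simp
  | succ n ih => rw [mul_add_one, sum_range_succ, sum_range_succ, ih, sum_range_succ, add_assoc]

theorem sum_Icc_choose_mul_two_pow_mul_bernoulli (k : ℕ) :
    ∑ l ∈ Icc 1 k, ((2 * k + 1).choose (2 * l) : ℚ) * 2 ^ (2 * l) * bernoulli (2 * l) =
      2 * k := by
  set f : ℕ → ℚ := fun i => ((2 * k + 1).choose i : ℚ) * 2 ^ i * bernoulli i
  have h := sum_choose_mul_two_pow_mul_bernoulli_of_odd (odd_two_mul_add_one k)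
  have hodd : ∀ j, f (2 * j + 3) = 0 := fun j => by
    simp [f, bernoulli_eq_zero_of_odd (n := 2 * j + 3) ⟨j + 1, by ring⟩ (by omega)]
  have hf0 : f 0 = 1 := by simp [f]
  have hf1 : f 1 = -(2 * k + 1) := by simp [f, bernoulli_one]; ring
  change ∑ i ∈ range (2 * k + 1 + 1), f i = 0 at h
  rw [sum_range_succ', sum_range_succ', sum_range_two_mul, sum_add_distrib] at h
  simp only [hodd, sum_const_zero, add_zero, hf0, hf1] at h
  change ∑ l ∈ Icc 1 k, f (2 * l) = 2 * k
  rw [← Ico_add_one_right_eq_Icc, sum_Ico_eq_sum_range, add_tsub_cancel_right]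
  simp only [show ∀ x, 2 * (1 + x) = 2 * x + 1 + 1 from fun x => by omega]
  linarith

theorem hasSum_one_div_nat_add_one_mul_pi_pow {l : ℕ} (hl : l ≠ 0) :
    HasSum (fun n : ℕ => 1 / (((n : ℝ) + 1) * π) ^ (2 * l))
      ((-1 : ℝ) ^ (l + 1) * 2 ^ (2 * l - 1) * bernoulli (2 * l) / (2 * l)!) := by
  have hzeta := (hasSum_nat_add_iff' 1).mpr (hasSum_zeta_nat hl)
  simp only [range_one, sum_singleton, cast_zero, zero_pow (mul_ne_zero two_ne_zero hl),
    div_zero, sub_zero, cast_add, cast_one] at hzeta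
  simpa only [div_div, ← mul_pow, mul_right_comm _ (π ^ _),
    mul_div_mul_right _ _ (pow_ne_zero _ pi_ne_zero)] using hzeta.div_const (π ^ (2 * l))

theorem tsum_factorial_div_nat_add_one_mul_pi_pow {k l : ℕ} (hl : 1 ≤ l) (hlk : l ≤ k) :
    ∑' n : ℕ, (-1 : ℝ) ^ (l - 1) * ((2 * k)! : ℝ) /
        (((2 * k + 1 - 2 * l)! : ℝ) * (((n : ℝ) + 1) * π) ^ (2 * l)) =
      ((2 * k + 1).choose (2 * l) : ℝ) * 2 ^ (2 * l) * bernoulli (2 * l) / (2 * (2 * k + 1)) := by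
  obtain ⟨m, rfl⟩ : ∃ m, l = m + 1 := ⟨l - 1, by omega⟩
  have hsum := (hasSum_one_div_nat_add_one_mul_pi_pow (l := m + 1) (by omega)).mul_left
    ((-1 : ℝ) ^ m * (2 * k)! / (2 * k + 1 - 2 * (m + 1))!)
  refine (tsum_congr fun n => ?_).trans (hsum.tsum_eq.trans ?_)
  · rw [mul_one_div, div_div, Nat.add_sub_cancel]
  rw [cast_choose ℝ (by omega : 2 * (m + 1) ≤ 2 * k + 1), factorial_succ,
    show 2 * (m + 1) - 1 = 2 * m + 1 by omega]
  have hsign : (-1 : ℝ) ^ m * (-1) ^ (m + 1 + 1) = 1 := by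
    rw [← pow_add]
    exact Even.neg_one_pow ⟨m + 1, by ring⟩
  field_simp
  push_cast
  linear_combination
    ((2 * k)! * 2 ^ (2 * m + 1) * bernoulli (2 * (m + 1)) * 2 * (2 * k + 1) : ℝ) * hsign

theorem stmt_0_general (k : ℕ) :
    (1 / 2 : ℝ) = 1 / (4 * k + 2) +
      ∑ l ∈ Finset.Icc 1 k, ∑' n : ℕ,
        (-1 : ℝ) ^ (l - 1) * ((2 * k).factorial : ℝ) /
          (((2 * k + 1 - 2 * l).factorial : ℝ) * (((n : ℝ) + 1) * π) ^ (2 * l)) := by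
  rw [sum_congr rfl fun l hl =>
    tsum_factorial_div_nat_add_one_mul_pi_pow (mem_Icc.1 hl).1 (mem_Icc.1 hl).2, ← sum_div]
  have hbernoulli := congrArg (Rat.cast : ℚ → ℝ) (sum_Icc_choose_mul_two_pow_mul_bernoulli k)
  push_cast at hbernoulli
  rw [hbernoulli]
  field_simp
  ring

/-- For every integer `k ≥ 1`,
`1/2 = 1/(4k+2) + ∑_{l=1}^{k} ∑_{n=1}^{∞} (-1)^(l-1) (2k)! / ((2k+1-2l)! (nπ)^(2l))`. -/
theorem stmt_0 (k : ℕ) (hk : 1 ≤ k) :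
    (1 / 2 : ℝ) = 1 / (4 * k + 2) +
      ∑ l ∈ Finset.Icc 1 k, ∑' n : ℕ,
        (-1 : ℝ) ^ (l - 1) * ((2 * k).factorial : ℝ) /
          (((2 * k + 1 - 2 * l).factorial : ℝ) * (((n : ℝ) + 1) * π) ^ (2 * l)) :=
  stmt_0_general k
end

section
/- For all integers k ≥ 0 and n ≥ 1, (1/π) · ∫_{-π}^{0} x^{2k} · sin(nx) dx equals Σ_{l=0}^{k} π^{2k-2l-1} · (-1)^{n+l} · (2k)! / (n^{2l+1} · (2k-2l)!) − (-1)^{k} · (2k)! / (π · n^{2k+1}). -/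
/-!
Two integrations by parts give the reduction formula
`∫_{-π}^0 x^(m+2) sin(nx) dx = (-π)^(m+2) (-1)^n / n - (m+2)(m+1)/n² ∫_{-π}^0 x^m sin(nx) dx`,
and unrolling it `k` times down to `∫_{-π}^0 sin(nx) dx = ((-1)^n - 1)/n` yields the sum.
-/

open Real
open scoped Nat

theorem hasDerivAt_pow_mul_sin_reduction (m : ℕ) {ω : ℝ} (hω : ω ≠ 0) (x : ℝ) :
    HasDerivAt
      (fun x => -x ^ (m + 2) * cos (ω * x) / ω + (m + 2) * x ^ (m + 1) * sin (ω * x) / ω ^ 2)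
      (x ^ (m + 2) * sin (ω * x) + (m + 2) * (m + 1) / ω ^ 2 * (x ^ m * sin (ω * x))) x := by
  have hωx : HasDerivAt (fun x => ω * x) ω x := by simpa using (hasDerivAt_id x).const_mul ω
  have h₁ := ((hasDerivAt_pow (m + 2) x).neg.mul hωx.cos).div_const ω
  have h₂ := (((hasDerivAt_pow (m + 1) x).const_mul ((m : ℝ) + 2)).mul hωx.sin).div_const (ω ^ 2)
  refine (h₁.add h₂).congr_deriv ?_
  simp only [Pi.neg_apply, Nat.add_sub_cancel]
  push_cast
  field_simp
  ring

theorem integral_neg_pi_zero_sin_nat_mul {n : ℕ} (hn : n ≠ 0) :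
    ∫ x in (-π)..0, sin (n * x) = ((-1) ^ n - 1) / n := by
  have hn' : (n : ℝ) ≠ 0 := Nat.cast_ne_zero.mpr hn
  simp only [intervalIntegral.integral_comp_mul_left _ hn', mul_neg, mul_zero, integral_sin,
    cos_neg, cos_nat_mul_pi, cos_zero, smul_eq_mul]
  ring

theorem integral_neg_pi_zero_pow_add_two_mul_sin (m : ℕ) {n : ℕ} (hn : n ≠ 0) :
    ∫ x in (-π)..0, x ^ (m + 2) * sin (n * x) =
      (-π) ^ (m + 2) * (-1) ^ n / n
        - (m + 2) * (m + 1) / (n : ℝ) ^ 2 * ∫ x in (-π)..0, x ^ m * sin (n * x) := by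
  have hn' : (n : ℝ) ≠ 0 := Nat.cast_ne_zero.mpr hn
  have hcont (j : ℕ) : Continuous fun x : ℝ => x ^ j * sin (n * x) := by fun_prop
  have hFTC := intervalIntegral.integral_eq_sub_of_hasDerivAt (a := -π) (b := 0)
    (fun x _ => hasDerivAt_pow_mul_sin_reduction m hn' x)
    (Continuous.intervalIntegrable (by fun_prop) _ _)
  rw [intervalIntegral.integral_add ((hcont _).intervalIntegrable _ _)
    (((hcont m).const_mul _).intervalIntegrable _ _),
    intervalIntegral.integral_const_mul] at hFTC
  simp only [ne_eq, Nat.add_eq_zero_iff, OfNat.ofNat_ne_zero, and_false, not_false_eq_true, zero_pow,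
    neg_zero, mul_zero, cos_zero, mul_one, zero_div, sin_zero, add_zero, mul_neg, cos_neg,
    cos_nat_mul_pi, neg_mul, sin_neg, sin_nat_mul_pi, zero_sub] at hFTC
  linear_combination hFTC

theorem Nat.cast_factorial_two_mul_succ (k : ℕ) :
    ((2 * (k + 1))! : ℝ) = (2 * k + 2) * (2 * k + 1) * (2 * k)! := by
  rw [show 2 * (k + 1) = 2 * k + 1 + 1 by ring, Nat.factorial_succ, Nat.factorial_succ]
  push_cast
  ring

noncomputable def sinMomentTerm (n k l : ℕ) : ℝ :=
  π ^ (2 * (k : ℤ) - 2 * l) * (-1) ^ (n + l) * (2 * k)! / ((n : ℝ) ^ (2 * l + 1) * (2 * k - 2 * l)!)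

theorem sinMomentTerm_zero_right (n k : ℕ) : sinMomentTerm n k 0 = π ^ (2 * k) * (-1) ^ n / n := by
  simp only [sinMomentTerm, CharP.cast_eq_zero, mul_zero, sub_zero, add_zero, zero_add, pow_one,
    Nat.sub_zero]
  rw [show (2 * (k : ℤ)) = ((2 * k : ℕ) : ℤ) by push_cast; ring, zpow_natCast]
  field_simp

theorem sinMomentTerm_succ_succ {n : ℕ} (hn : n ≠ 0) (k l : ℕ) :
    sinMomentTerm n (k + 1) (l + 1) =
      -((2 * k + 2) * (2 * k + 1) / (n : ℝ) ^ 2) * sinMomentTerm n k l := by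
  simp only [sinMomentTerm, Nat.cast_factorial_two_mul_succ]
  rw [show 2 * (k + 1) - 2 * (l + 1) = 2 * k - 2 * l by omega,
    show 2 * ((k + 1 : ℕ) : ℤ) - 2 * ((l + 1 : ℕ) : ℤ) = 2 * (k : ℤ) - 2 * l by push_cast; ring]
  field_simp
  ring

theorem integral_neg_pi_zero_pow_two_mul_mul_sin {n : ℕ} (hn : n ≠ 0) (k : ℕ) :
    ∫ x in (-π)..0, x ^ (2 * k) * sin (n * x) =
      (∑ l ∈ Finset.range (k + 1), sinMomentTerm n k l)
        - (-1) ^ k * (2 * k)! / (n : ℝ) ^ (2 * k + 1) := by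
  induction k with
  | zero =>
    simp only [mul_zero, pow_zero, one_mul, zero_add, integral_neg_pi_zero_sin_nat_mul hn,
      Finset.range_one, Finset.sum_singleton, sinMomentTerm_zero_right, Nat.factorial_zero,
      Nat.cast_one, mul_one, pow_one]
    ring
  | succ k ih =>
    simp only [Finset.sum_range_succ' _ (k + 1), sinMomentTerm_zero_right,
      sinMomentTerm_succ_succ hn, ← Finset.mul_sum, Nat.cast_factorial_two_mul_succ]
    rw [show 2 * (k + 1) = 2 * k + 2 by ring, integral_neg_pi_zero_pow_add_two_mul_sin _ hn, ih,
      Even.neg_pow ⟨k + 1, by ring⟩]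
    push_cast
    field_simp
    ring

/-- `(1/π) ∫_{-π}^0 x^(2k) sin(nx) dx
    = ∑_{l=0}^{k} π^(2k-2l-1) (-1)^(n+l) (2k)! / (n^(2l+1) (2k-2l)!)
      - (-1)^k (2k)! / (π n^(2k+1))`. -/
theorem stmt_4 (k n : ℕ) (hn : 1 ≤ n) :
    (1 / π) * ∫ x in (-π)..(0 : ℝ), x ^ (2 * k) * Real.sin (n * x) =
      (∑ l ∈ Finset.range (k + 1),
        π ^ (2 * (k : ℤ) - 2 * (l : ℤ) - 1) * (-1) ^ (n + l) * ((2 * k).factorial : ℝ) /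
          ((n : ℝ) ^ (2 * l + 1) * ((2 * k - 2 * l).factorial : ℝ)))
      - (-1 : ℝ) ^ k * ((2 * k).factorial : ℝ) / (π * (n : ℝ) ^ (2 * k + 1)) := by
  rw [integral_neg_pi_zero_pow_two_mul_mul_sin (by omega) k, mul_sub, Finset.mul_sum]
  congr 1
  · refine Finset.sum_congr rfl fun l _ => ?_
    rw [sinMomentTerm, zpow_sub_one₀ pi_ne_zero]
    ring
  · ring
end

section
/- For every integer k ≥ 1 there exists a rational number Q such that Σ_{n=1}^{∞} (-1)^{n-1}/(2n-1)^{2k+1} = Q · π^{2k+1}. -/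
open Real

/- The Fourier expansion of the odd Bernoulli polynomials,
`∑ₙ sin(2πnx)/n^(2k+1) = (-1)^(k+1) (2π)^(2k+1)/(2 (2k+1)!) · B_{2k+1}(x)` on `[0, 1]`,
evaluated at `x = 1/4`: there `sin(2πn/4)` vanishes for even `n` and is `(-1)^m` for `n = 2m+1`,
so the left side is the alternating sum over odd `n`, while the right side is a rational
multiple of `π^(2k+1)`. -/

theorem hasSum_odd_iff_of_even_eq_zero {α : Type*} [AddCommMonoid α] [TopologicalSpace α]
    {f : ℕ → α} {a : α} (hf : ∀ m, f (2 * m) = 0) :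
    HasSum (fun m => f (2 * m + 1)) a ↔ HasSum f a := by
  refine Function.Injective.hasSum_iff (f := f) (fun a b h => by simpa using h) fun n hn => ?_
  obtain ⟨m, rfl | rfl⟩ := n.even_or_odd'
  · exact hf m
  · exact absurd ⟨m, rfl⟩ hn

theorem Real.sin_two_pi_mul_nat_mul_quarter_even (m : ℕ) :
    sin (2 * π * (2 * m : ℕ) * (1 / 4)) = 0 := by
  rw [show 2 * π * (2 * m : ℕ) * (1 / 4) = m * π by push_cast; ring, sin_nat_mul_pi]

theorem Real.sin_two_pi_mul_nat_mul_quarter_odd (m : ℕ) :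
    sin (2 * π * (2 * m + 1 : ℕ) * (1 / 4)) = (-1) ^ m := by
  rw [show 2 * π * (2 * m + 1 : ℕ) * (1 / 4) = m * π + π / 2 by push_cast; ring,
    sin_add_pi_div_two, cos_nat_mul_pi]

theorem hasSum_alternating_one_div_odd_pow {k : ℕ} (hk : k ≠ 0) :
    HasSum (fun m : ℕ => (-1 : ℝ) ^ m / (2 * (m : ℝ) + 1) ^ (2 * k + 1))
      ((-1 : ℝ) ^ (k + 1) * (2 * π) ^ (2 * k + 1) / 2 / (2 * k + 1).factorial *
        (((Polynomial.bernoulli (2 * k + 1)).eval (1 / 4) : ℚ) : ℝ)) := by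
  have hfourier := hasSum_one_div_nat_pow_mul_sin hk (x := 1 / 4) ⟨by norm_num, by norm_num⟩
  rw [← hasSum_odd_iff_of_even_eq_zero fun m => by
    rw [sin_two_pi_mul_nat_mul_quarter_even, mul_zero]] at hfourier
  convert hfourier using 1
  · ext m
    rw [sin_two_pi_mul_nat_mul_quarter_odd]
    push_cast
    ring
  · congr 1
    rw [Polynomial.eval_map_algebraMap, show (1 / 4 : ℝ) = algebraMap ℚ ℝ (1 / 4) by norm_num,
      Polynomial.aeval_algebraMap_apply_eq_algebraMap_eval, eq_ratCast]

/-- For every integer `k ≥ 1` there is a rational `Q` with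
`∑_{n=1}^∞ (-1)^(n-1)/(2n-1)^(2k+1) = Q π^(2k+1)`. -/
theorem stmt_6 (k : ℕ) (hk : 1 ≤ k) :
    ∃ Q : ℚ, ∑' n : ℕ, (-1 : ℝ) ^ n / (2 * (n : ℝ) + 1) ^ (2 * k + 1) =
      (Q : ℝ) * π ^ (2 * k + 1) := by
  refine ⟨(-1) ^ (k + 1) * 2 ^ (2 * k + 1) / 2 / (2 * k + 1).factorial *
    (Polynomial.bernoulli (2 * k + 1)).eval (1 / 4), ?_⟩
  rw [(hasSum_alternating_one_div_odd_pow (by omega)).tsum_eq]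
  push_cast
  ring
end
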